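/- Let ω be an infinite word over a finite alphabet whose abelian complexity function ρ^ab_ω is bounded. Then for every positive integer k, ω contains an abelian k-power as a factor. -/

import Mathlib

/-- The factor of the infinite word `ω` of length `n` starting at position `i`. -/
def factor {A : Type*} (ω : ℕ → A) (i n : ℕ) : List A :=
  (List.range n).map fun j => ω (i + j)

/-- The abelian complexity of `ω`: the number of abelian equivalence classes of
factors of `ω` of length `n`. -/
noncomputable def abelianComplexity {A : Type*} [DecidableEq A] (ω : ℕ → A) (n : ℕ) : ℕ :=
  Set.ncard {c : A → ℕ | ∃ i : ℕ, c = fun a => (factor ω i n).count a}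

/-- The word `ω` has an abelian `k`-power with abelian period `ℓ > 0` starting at
position `i`: the `k` consecutive blocks of length `ℓ` starting at `i` are
pairwise abelian equivalent. -/
def AbelianPowerAt {A : Type*} [DecidableEq A] (ω : ℕ → A) (i k ℓ : ℕ) : Prop :=
  0 < ℓ ∧ ∀ j₁ j₂ : ℕ, j₁ < k → j₂ < k → ∀ a : A,
    (factor ω (i + j₁ * ℓ) ℓ).count a = (factor ω (i + j₂ * ℓ) ℓ).count a

/-!
If the abelian complexity of `ω` is at most `M`, then for every letter `a` the numbers of
occurrences of `a` in two factors of the same length differ by less than `M`: sliding the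
window changes the count by at most one, so all intermediate values are attained, each value by a
different abelian class. Consequently the least count `m(n)` of `a` in a factor of length `n` is
superadditive and satisfies `q m(p) ≤ p (m(q) + M)`, which yields a frequency `α` with
`|P(n) - n α| ≤ M`, where `P(n)` counts `a` in the prefix of length `n`.

Colour `n` by the vector of the integers `⌊2 (P(n) - n α)⌋`, one per letter; only finitely many
colours occur, so by van der Waerden's theorem some progression `b, b + ℓ, …, b + k ℓ` is
monochromatic. The count of `a` in the block between consecutive terms is
`P(b + (j + 1) ℓ) - P(b + j ℓ)`, which is `ℓ α` up to an error that varies by less than `1`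
along the progression; being integers, these counts are all equal.
-/

section Factor

variable {A : Type*} (ω : ℕ → A)

theorem factor_add (i p q : ℕ) :
    factor ω i (p + q) = factor ω i p ++ factor ω (i + p) q := by
  simp only [factor, List.range_add, List.map_append, List.map_map]
  congr 1
  ext j
  simp [Nat.add_assoc]

theorem length_factor (i n : ℕ) : (factor ω i n).length = n := by
  simp [factor]

variable [DecidableEq A]

theorem count_factor_add (a : A) (i p q : ℕ) :
    (factor ω i (p + q)).count a = (factor ω i p).count a + (factor ω (i + p) q).count a := by
  rw [factor_add, List.count_append]

theorem count_factor_le (a : A) (i n : ℕ) : (factor ω i n).count a ≤ n :=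
  List.count_le_length.trans (length_factor ω i n).le

theorem count_factor_succ_le (a : A) (i n : ℕ) :
    (factor ω (i + 1) n).count a ≤ (factor ω i n).count a + 1 ∧
      (factor ω i n).count a ≤ (factor ω (i + 1) n).count a + 1 := by
  have hlast := count_factor_add ω a i n 1
  have hfirst := count_factor_add ω a i 1 n
  rw [Nat.add_comm 1 n] at hfirst
  have := count_factor_le ω a (i + n) 1
  have := count_factor_le ω a i 1
  omega

theorem finite_parikhVectors [Finite A] (n : ℕ) :
    {c : A → ℕ | ∃ i : ℕ, c = fun a => (factor ω i n).count a}.Finite :=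
  (Set.Finite.pi' fun _ => Set.finite_Iic n).subset <| by
    rintro _ ⟨i, rfl⟩ a
    exact count_factor_le ω a i n

end Factor

theorem uIcc_subset_range_of_steps_le_one {f : ℕ → ℕ} (hup : ∀ t, f (t + 1) ≤ f t + 1)
    (hdown : ∀ t, f t ≤ f (t + 1) + 1) (s t : ℕ) : Set.uIcc (f s) (f t) ⊆ Set.range f := by
  wlog hst : s ≤ t generalizing s t
  · rw [Set.uIcc_comm]
    exact this t s (le_of_not_ge hst)
  induction t, hst using Nat.le_induction with
  | base => simp
  | succ t _ ih =>
    intro c hc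
    by_cases hct : c ∈ Set.uIcc (f s) (f t)
    · exact ih hct
    · refine ⟨t + 1, ?_⟩
      simp only [Set.mem_uIcc] at hc hct
      have := hup t
      have := hdown t
      omega

theorem count_factor_lt_add_abelianComplexity {A : Type*} [Finite A] [DecidableEq A]
    (ω : ℕ → A) (a : A) (i j n : ℕ) :
    (factor ω i n).count a < (factor ω j n).count a + abelianComplexity ω n := by
  set S := {c : A → ℕ | ∃ i : ℕ, c = fun a => (factor ω i n).count a}
  have hIcc : Set.Icc ((factor ω j n).count a) ((factor ω i n).count a) ⊆
      (fun c : A → ℕ => c a) '' S := by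
    intro x hx
    obtain ⟨t, rfl⟩ := uIcc_subset_range_of_steps_le_one (fun t => (count_factor_succ_le ω a t n).1)
      (fun t => (count_factor_succ_le ω a t n).2) j i (Set.Icc_subset_uIcc hx)
    exact ⟨_, ⟨t, rfl⟩, rfl⟩
  have hcard : (Set.Icc ((factor ω j n).count a) ((factor ω i n).count a)).ncard ≤
      abelianComplexity ω n :=
    (Set.ncard_le_ncard hIcc ((finite_parikhVectors ω n).image _)).trans
      (Set.ncard_image_le (finite_parikhVectors ω n))
  rw [← Finset.coe_Icc, Set.ncard_coe_finset, Nat.card_Icc] at hcard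
  omega

section MinCount

variable {A : Type*} [DecidableEq A] (ω : ℕ → A)

noncomputable def minCount (a : A) (n : ℕ) : ℕ :=
  ⨅ i, (factor ω i n).count a

theorem minCount_le (a : A) (n i : ℕ) : minCount ω a n ≤ (factor ω i n).count a :=
  ciInf_le (OrderBot.bddBelow _) i

theorem exists_count_factor_eq_minCount (a : A) (n : ℕ) :
    ∃ i, (factor ω i n).count a = minCount ω a n :=
  ciInf_mem _

theorem minCount_add_le (a : A) (p q : ℕ) :
    minCount ω a p + minCount ω a q ≤ minCount ω a (p + q) := by
  obtain ⟨i, hi⟩ := exists_count_factor_eq_minCount ω a (p + q)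
  rw [← hi, count_factor_add]
  exact add_le_add (minCount_le ω a p i) (minCount_le ω a q (i + p))

theorem mul_minCount_le (a : A) (p q : ℕ) : q * minCount ω a p ≤ minCount ω a (q * p) := by
  induction q with
  | zero => simp
  | succ q ih =>
    rw [add_mul, add_mul, one_mul, one_mul]
    exact (add_le_add_left ih _).trans (minCount_add_le ω a _ _)

variable [Finite A] {M : ℕ} (hM : ∀ n, abelianComplexity ω n ≤ M)
include hM

theorem count_factor_le_minCount_add (a : A) (n i : ℕ) :
    (factor ω i n).count a ≤ minCount ω a n + M := by
  obtain ⟨j, hj⟩ := exists_count_factor_eq_minCount ω a n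
  have := count_factor_lt_add_abelianComplexity ω a i j n
  have := hM n
  omega

theorem count_factor_mul_le (a : A) (q t i : ℕ) :
    (factor ω i (t * q)).count a ≤ t * (minCount ω a q + M) := by
  induction t generalizing i with
  | zero => simp [factor]
  | succ t ih =>
    rw [add_mul, one_mul, count_factor_add, add_mul, one_mul]
    exact add_le_add (ih i) (count_factor_le_minCount_add ω hM a q _)

theorem mul_minCount_le_mul_minCount_add (a : A) (p q : ℕ) :
    q * minCount ω a p ≤ p * (minCount ω a q + M) :=
  calc q * minCount ω a p ≤ minCount ω a (q * p) := mul_minCount_le ω a p q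
    _ ≤ (factor ω 0 (p * q)).count a := mul_comm q p ▸ minCount_le ω a _ 0
    _ ≤ p * (minCount ω a q + M) := count_factor_mul_le ω hM a q p 0

end MinCount

theorem exists_forall_le_mul_le_add {m : ℕ → ℕ} {M : ℕ} (h : ∀ p q, q * m p ≤ p * (m q + M)) :
    ∃ α : ℝ, ∀ n : ℕ, (m n : ℝ) ≤ n * α ∧ n * α ≤ m n + M := by
  have hcast : ∀ p q : ℕ, (q : ℝ) * m p ≤ p * (m q + M) := fun p q => by exact_mod_cast h p q
  have hbdd : BddAbove (Set.range fun p : ℕ => (m (p + 1) : ℝ) / (p + 1 : ℕ)) := by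
    refine ⟨m 1 + M, ?_⟩
    rintro _ ⟨p, rfl⟩
    rw [div_le_iff₀ (by positivity)]
    simpa [mul_comm] using hcast (p + 1) 1
  refine ⟨⨆ p : ℕ, (m (p + 1) : ℝ) / (p + 1 : ℕ), fun n => ?_⟩
  rcases n with _ | n
  · have hm0 : m 0 = 0 := by simpa using h 0 1
    simp [hm0]
  have hn : (0 : ℝ) < (n + 1 : ℕ) := by positivity
  constructor
  · rw [mul_comm, ← div_le_iff₀ hn]
    exact le_ciSup hbdd n
  · rw [mul_comm, ← le_div_iff₀ hn]
    refine ciSup_le fun p => ?_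
    rw [div_le_div_iff₀ (by positivity) hn]
    linarith [hcast (p + 1) (n + 1)]

theorem exists_abs_count_prefix_sub_mul_le {A : Type*} [Finite A] [DecidableEq A] (ω : ℕ → A)
    {M : ℕ} (hM : ∀ n, abelianComplexity ω n ≤ M) (a : A) :
    ∃ α : ℝ, ∀ n : ℕ, |((factor ω 0 n).count a : ℝ) - n * α| ≤ M := by
  obtain ⟨α, hα⟩ := exists_forall_le_mul_le_add (mul_minCount_le_mul_minCount_add ω hM a)
  refine ⟨α, fun n => abs_le.mpr ?_⟩
  have hlow : (minCount ω a n : ℝ) ≤ (factor ω 0 n).count a := by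
    exact_mod_cast minCount_le ω a n 0
  have hhigh : ((factor ω 0 n).count a : ℝ) ≤ minCount ω a n + M := by
    exact_mod_cast count_factor_le_minCount_add ω hM a n 0
  constructor <;> linarith [hα n]

theorem sub_eq_sub_of_floor_two_mul_eq {P : ℕ → ℤ} {α : ℝ} {i j ℓ : ℕ}
    (hstart : ⌊2 * (P i - i * α)⌋ = ⌊2 * (P j - j * α)⌋)
    (hend : ⌊2 * (P (i + ℓ) - (i + ℓ : ℕ) * α)⌋ = ⌊2 * (P (j + ℓ) - (j + ℓ : ℕ) * α)⌋) :
    P (i + ℓ) - P i = P (j + ℓ) - P j := by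
  have h₁ := abs_lt.mp (Int.abs_sub_lt_one_of_floor_eq_floor hstart)
  have h₂ := abs_lt.mp (Int.abs_sub_lt_one_of_floor_eq_floor hend)
  push_cast at h₁ h₂
  have hlt : |((P (i + ℓ) - P i - (P (j + ℓ) - P j) : ℤ) : ℝ)| < 1 := by
    push_cast
    rw [abs_lt]
    constructor <;> linarith
  have := Int.abs_lt_one_iff.mp (by exact_mod_cast hlt)
  omega

theorem exists_mono_arithProgression {κ : Type*} (C : ℕ → κ) (hC : (Set.range C).Finite)
    (k : ℕ) : ∃ ℓ > 0, ∃ b, ∀ j ≤ k, C (b + j * ℓ) = C b := by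
  have := hC.to_subtype
  obtain ⟨ℓ, hℓ, b, c, hc⟩ :=
    Combinatorics.exists_mono_homothetic_copy (Finset.range (k + 1)) (Set.rangeFactorization C)
  have hcolour : ∀ j ≤ k, C (b + j * ℓ) = c := fun j hj => by
    rw [← hc j (Finset.mem_range.mpr (Nat.lt_succ_of_le hj)), smul_eq_mul, mul_comm, add_comm]
    rfl
  exact ⟨ℓ, hℓ, b, fun j hj => by simpa using (hcolour j hj).trans (hcolour 0 (Nat.zero_le k)).symm⟩

theorem finite_range_floor_of_abs_le {ι κ : Type*} [Finite κ] (f : ι → κ → ℝ) (B : ℝ)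
    (hf : ∀ i c, |f i c| ≤ B) : (Set.range fun i c => ⌊f i c⌋).Finite :=
  (Set.Finite.pi' fun _ => Set.finite_Icc ⌊-B⌋ ⌊B⌋).subset <| by
    rintro _ ⟨i, rfl⟩ c
    exact ⟨Int.floor_mono (neg_le_of_abs_le (hf i c)), Int.floor_mono (le_of_abs_le (hf i c))⟩

theorem abelian_power_of_bounded_abelianComplexity_general
    {A : Type*} [Fintype A] [DecidableEq A] (ω : ℕ → A)
    (hb : ∃ M : ℕ, ∀ n : ℕ, abelianComplexity ω n ≤ M)
    (k : ℕ) :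
    ∃ i ℓ : ℕ, AbelianPowerAt ω i k ℓ := by
  obtain ⟨M, hM⟩ := hb
  choose α hα using exists_abs_count_prefix_sub_mul_le ω hM
  set P : A → ℕ → ℤ := fun a n => (factor ω 0 n).count a
  set D : ℕ → A → ℝ := fun n a => 2 * (P a n - n * α a)
  have hD : ∀ n a, |D n a| ≤ 2 * M := fun n a => by
    rw [abs_mul, abs_two]
    exact mul_le_mul_of_nonneg_left (by exact_mod_cast hα a n) zero_le_two
  obtain ⟨ℓ, hℓ, b, hmono⟩ :=
    exists_mono_arithProgression _ (finite_range_floor_of_abs_le D _ hD) k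
  have hfloor : ∀ j ≤ k, ∀ a, ⌊D (b + j * ℓ) a⌋ = ⌊D b a⌋ := fun j hj a =>
    congrFun (hmono j hj) a
  refine ⟨b, ℓ, hℓ, fun j₁ j₂ h₁ h₂ a => ?_⟩
  have hend : ∀ j < k, ⌊D (b + j * ℓ + ℓ) a⌋ = ⌊D b a⌋ := fun j hj => by
    rw [add_assoc, ← add_one_mul]
    exact hfloor (j + 1) hj a
  have hblock := sub_eq_sub_of_floor_two_mul_eq (P := P a) (α := α a)
    ((hfloor j₁ h₁.le a).trans (hfloor j₂ h₂.le a).symm) ((hend j₁ h₁).trans (hend j₂ h₂).symm)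
  have e₁ := count_factor_add ω a 0 (b + j₁ * ℓ) ℓ
  have e₂ := count_factor_add ω a 0 (b + j₂ * ℓ) ℓ
  simp only [P, zero_add] at hblock e₁ e₂
  omega

/-- Any infinite word with bounded abelian complexity contains an abelian
`k`-power for every positive integer `k`. -/
theorem abelian_power_of_bounded_abelianComplexity
    {A : Type*} [Fintype A] [DecidableEq A] (ω : ℕ → A)
    (hb : ∃ M : ℕ, ∀ n : ℕ, abelianComplexity ω n ≤ M)
    (k : ℕ) (hk : 0 < k) :
    ∃ i ℓ : ℕ, AbelianPowerAt ω i k ℓ :=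
  abelian_power_of_bounded_abelianComplexity_general ω hb k
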